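/- For any two density matrices σ₀, σ₁ on a finite-dimensional complex Hilbert space, ‖σ₀ - σ₁‖_tr ≥ 2(1 - √(F(σ₀, σ₁))). -/

import Mathlib

open Matrix
open scoped ComplexOrder

open scoped Classical in
/-- Square root of a positive semidefinite matrix (0 if not PSD). -/
noncomputable def matSqrt {n : ℕ} (A : Matrix (Fin n) (Fin n) ℂ) : Matrix (Fin n) (Fin n) ℂ :=
  if h : A.PosSemidef then
    (h.1.eigenvectorUnitary : Matrix (Fin n) (Fin n) ℂ) *
      diagonal ((↑) ∘ Real.sqrt ∘ h.1.eigenvalues) *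
      (star h.1.eigenvectorUnitary : Matrix (Fin n) (Fin n) ℂ)
  else 0

/-- Fidelity F(ρ,σ) = (Tr √(√ρ σ √ρ))². -/
noncomputable def fidelity {n : ℕ} (ρ σ : Matrix (Fin n) (Fin n) ℂ) : ℝ :=
  ((matSqrt (matSqrt ρ * σ * matSqrt ρ)).trace.re) ^ 2

/-- Trace norm ‖A‖_tr = Tr √(Aᴴ A). -/
noncomputable def traceNorm {n : ℕ} (A : Matrix (Fin n) (Fin n) ℂ) : ℝ :=
  (matSqrt (Aᴴ * A)).trace.re

/-- A density matrix: positive semidefinite with unit trace. -/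
def IsDensityMatrix {n : ℕ} (ρ : Matrix (Fin n) (Fin n) ℂ) : Prop :=
  ρ.PosSemidef ∧ ρ.trace = 1

/-!
Write `a = √σ₀`, `b = √σ₁`. Two inequalities combine to the claim.

* `Re Tr (b a) ≤ Tr |b a| = √F(σ₀, σ₁)`, since `(b a)ᴴ (b a) = a σ₁ a`. The inequality
  `Re Tr N ≤ Tr |N|` holds in an eigenbasis of `|N|`: each column of `N` there has norm equal to the
  corresponding eigenvalue of `|N|`, which bounds the diagonal entry.
* (Powers–Størmer) `Tr (a - b)² ≤ Tr |a² - b²|`. In an eigenbasis of `a - b` with eigenvalues `λᵢ`,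
  the identity `2 (a² - b²) = (a - b)(a + b) + (a + b)(a - b)` gives `(a² - b²)ᵢᵢ = λᵢ (a + b)ᵢᵢ`,
  while `-(a + b) ≤ a - b ≤ a + b` gives `|λᵢ| ≤ (a + b)ᵢᵢ`; hence
  `λᵢ² ≤ |(a² - b²)ᵢᵢ| ≤ |a² - b²|ᵢᵢ`.

For unit-trace `σ₀, σ₁` the left side of the second is `2 - 2 Re Tr (b a)`.
-/

open scoped MatrixOrder

namespace CFC

variable {A : Type*} [NonUnitalRing A] [StarRing A] [TopologicalSpace A] [Module ℝ A]
  [SMulCommClass ℝ A A] [IsScalarTower ℝ A A]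
  [NonUnitalContinuousFunctionalCalculus ℝ A IsSelfAdjoint] [PartialOrder A]
  [StarOrderedRing A] [NonnegSpectrumClass ℝ A] [IsTopologicalRing A] [T2Space A]

lemma le_abs_self (a : A) (ha : IsSelfAdjoint a := by cfc_tac) : a ≤ abs a := by
  rw [← sub_nonneg, abs_sub_self a]
  exact nsmul_nonneg (negPart_nonneg a) 2

lemma neg_abs_le_self (a : A) (ha : IsSelfAdjoint a := by cfc_tac) : -abs a ≤ a := by
  rw [neg_le_iff_add_nonneg', abs_add_self a]
  exact nsmul_nonneg (posPart_nonneg a) 2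

end CFC

namespace Matrix

variable {𝕜 : Type*} [RCLike 𝕜] {ι : Type*}

lemma abs_re_diag_le_re_diag {M N : Matrix ι ι 𝕜} (hl : -M ≤ N) (hu : N ≤ M) (i : ι) :
    |RCLike.re (N i i)| ≤ RCLike.re (M i i) := by
  have h₁ := (RCLike.nonneg_iff.mp ((le_iff.mp hu).diag_nonneg (i := i))).1
  have h₂ := (RCLike.nonneg_iff.mp ((le_iff.mp hl).diag_nonneg (i := i))).1
  simp only [sub_apply, neg_apply, sub_neg_eq_add, map_sub, map_add] at h₁ h₂
  exact abs_le.mpr ⟨by linarith, by linarith⟩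

lemma norm_sq_le_re_conjTranspose_mul_self_apply {κ : Type*} [Fintype κ] (W : Matrix κ ι 𝕜)
    (k : κ) (i : ι) : ‖W k i‖ ^ 2 ≤ RCLike.re ((Wᴴ * W) i i) := by
  have hcol : RCLike.re ((Wᴴ * W) i i) = ∑ j, ‖W j i‖ ^ 2 := by
    simp only [mul_apply, conjTranspose_apply, RCLike.star_def, RCLike.conj_mul, map_sum,
      ← RCLike.ofReal_pow, RCLike.ofReal_re]
  rw [hcol]
  exact Finset.single_le_sum (f := fun j => ‖W j i‖ ^ 2) (fun _ _ => sq_nonneg _)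
    (Finset.mem_univ k)

variable [Fintype ι]

lemma abs_re_diag_map_le_re_diag_map (φ : Matrix ι ι 𝕜 ≃⋆ₐ[𝕜] Matrix ι ι 𝕜)
    {M N : Matrix ι ι 𝕜} (hl : -M ≤ N) (hu : N ≤ M) (i : ι) :
    |RCLike.re (φ N i i)| ≤ RCLike.re (φ M i i) :=
  abs_re_diag_le_re_diag (map_neg φ M ▸ OrderHomClass.mono φ hl) (OrderHomClass.mono φ hu) i

variable [DecidableEq ι]

lemma trace_sub_sq {R : Type*} [CommRing R] (a b : Matrix ι ι R) :
    ((a - b) ^ 2).trace = (a ^ 2).trace + (b ^ 2).trace - 2 * (b * a).trace := by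
  rw [sq, sub_mul, mul_sub, mul_sub, trace_sub, trace_sub, trace_sub, trace_mul_comm a b, sq, sq]
  ring

lemma trace_conjStarAlgAut (u : unitary (Matrix ι ι 𝕜)) (x : Matrix ι ι 𝕜) :
    (Unitary.conjStarAlgAut 𝕜 _ u x).trace = x.trace := by
  rw [Unitary.conjStarAlgAut_apply, trace_mul_cycle, Unitary.coe_star_mul_self, one_mul]

lemma re_trace_eq_sum_re_diag_conjStarAlgAut (u : unitary (Matrix ι ι 𝕜)) (x : Matrix ι ι 𝕜) :
    RCLike.re x.trace = ∑ i, RCLike.re (Unitary.conjStarAlgAut 𝕜 _ u x i i) := by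
  rw [← trace_conjStarAlgAut u x, trace, map_sum]
  rfl

theorem re_trace_le_re_trace_abs (N : Matrix ι ι 𝕜) :
    RCLike.re N.trace ≤ RCLike.re (CFC.abs N).trace := by
  have hS : (CFC.abs N).PosSemidef := (CFC.abs_nonneg N).posSemidef
  set u := star hS.1.eigenvectorUnitary
  set φ := Unitary.conjStarAlgAut 𝕜 _ u
  set s := hS.1.eigenvalues
  have hdiag : φ (CFC.abs N) = diagonal (RCLike.ofReal ∘ s) :=
    hS.1.conjStarAlgAut_star_eigenvectorUnitary
  have hcols : (φ N)ᴴ * φ N = diagonal (fun i => (s i : 𝕜) ^ 2) := by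
    rw [← star_eq_conjTranspose, ← map_star, ← map_mul, ← CFC.abs_mul_abs, map_mul, hdiag,
      diagonal_mul_diagonal]
    simp only [Function.comp_apply, sq]
  have hentry (i : ι) : RCLike.re (φ N i i) ≤ s i := by
    refine (RCLike.re_le_norm _).trans (abs_le_of_sq_le_sq' ?_ (hS.eigenvalues_nonneg i)).2
    simpa [hcols] using norm_sq_le_re_conjTranspose_mul_self_apply (φ N) i i
  calc RCLike.re N.trace = ∑ i, RCLike.re (φ N i i) := re_trace_eq_sum_re_diag_conjStarAlgAut u N
    _ ≤ ∑ i, s i := Finset.sum_le_sum fun i _ => hentry i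
    _ = RCLike.re (CFC.abs N).trace := by
        rw [re_trace_eq_sum_re_diag_conjStarAlgAut u, hdiag]
        simp only [diagonal_apply_eq, Function.comp_apply, RCLike.ofReal_re]

theorem re_trace_sub_sq_le_re_trace_abs_sq_sub {a b : Matrix ι ι 𝕜} (ha : 0 ≤ a) (hb : 0 ≤ b) :
    RCLike.re ((a - b) ^ 2).trace ≤ RCLike.re (CFC.abs (a ^ 2 - b ^ 2)).trace := by
  have hC : (a - b).IsHermitian := ha.posSemidef.1.sub hb.posSemidef.1
  have hdiff : IsSelfAdjoint (a ^ 2 - b ^ 2) :=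
    ((IsSelfAdjoint.of_nonneg ha).pow 2).sub ((IsSelfAdjoint.of_nonneg hb).pow 2)
  set u := star hC.eigenvectorUnitary
  set φ := Unitary.conjStarAlgAut 𝕜 _ u
  set l := hC.eigenvalues
  have hdiag : φ (a - b) = diagonal (RCLike.ofReal ∘ l) :=
    hC.conjStarAlgAut_star_eigenvectorUnitary
  have hl_le (i : ι) : |l i| ≤ RCLike.re (φ (a + b) i i) := by
    have hlow : -(a + b) ≤ a - b := by
      rw [neg_add']; exact sub_le_sub_right (neg_le_self ha) b
    have hupp : a - b ≤ a + b := (sub_le_self a hb).trans (le_add_of_nonneg_right hb)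
    simpa only [hdiag, diagonal_apply_eq, Function.comp_apply, RCLike.ofReal_re] using
      abs_re_diag_map_le_re_diag_map φ hlow hupp i
  have hsym : (a ^ 2 - b ^ 2) + (a ^ 2 - b ^ 2) = (a - b) * (a + b) + (a + b) * (a - b) := by
    noncomm_ring
  have hdiff_diag (i : ι) :
      RCLike.re (φ (a ^ 2 - b ^ 2) i i) = l i * RCLike.re (φ (a + b) i i) := by
    have := congrArg (fun x => RCLike.re (φ x i i)) hsym
    simp only [map_add, map_mul, hdiag, add_apply, diagonal_mul, mul_diagonal,
      Function.comp_apply, RCLike.re_ofReal_mul, RCLike.re_mul_ofReal] at this ⊢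
    linarith
  have hentry (i : ι) : l i ^ 2 ≤ RCLike.re (φ (CFC.abs (a ^ 2 - b ^ 2)) i i) :=
    calc l i ^ 2 = |l i| * |l i| := by rw [← sq_abs, sq]
      _ ≤ |l i| * RCLike.re (φ (a + b) i i) := mul_le_mul_of_nonneg_left (hl_le i) (abs_nonneg _)
      _ = |RCLike.re (φ (a ^ 2 - b ^ 2) i i)| := by
          rw [hdiff_diag, abs_mul, abs_of_nonneg ((abs_nonneg _).trans (hl_le i))]
      _ ≤ _ := abs_re_diag_map_le_re_diag_map φ (CFC.neg_abs_le_self _ hdiff)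
          (CFC.le_abs_self _ hdiff) i
  calc RCLike.re ((a - b) ^ 2).trace = ∑ i, l i ^ 2 := by
        rw [re_trace_eq_sum_re_diag_conjStarAlgAut u, map_pow, hdiag, diagonal_pow]
        simp only [diagonal_apply_eq, Pi.pow_apply, Function.comp_apply, ← RCLike.ofReal_pow,
          RCLike.ofReal_re]
    _ ≤ ∑ i, RCLike.re (φ (CFC.abs (a ^ 2 - b ^ 2)) i i) := Finset.sum_le_sum fun i _ => hentry i
    _ = RCLike.re (CFC.abs (a ^ 2 - b ^ 2)).trace :=
        (re_trace_eq_sum_re_diag_conjStarAlgAut u _).symm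

end Matrix

section DensityMatrices

variable {n : ℕ}

lemma matSqrt_eq_sqrt {A : Matrix (Fin n) (Fin n) ℂ} (h : A.PosSemidef) :
    matSqrt A = CFC.sqrt A := by
  rw [CFC.sqrt_eq_cfc, cfc_nnreal_eq_real _ A h.nonneg, h.1.cfc_eq, matSqrt, dif_pos h,
    IsHermitian.cfc, Unitary.conjStarAlgAut_apply]
  refine congrArg (fun d => _ * diagonal d * _) (funext fun i => ?_)
  simp [Real.coe_toNNReal', max_eq_left (h.eigenvalues_nonneg i)]

lemma traceNorm_eq_re_trace_abs (A : Matrix (Fin n) (Fin n) ℂ) :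
    traceNorm A = (CFC.abs A).trace.re := by
  rw [traceNorm, matSqrt_eq_sqrt (posSemidef_conjTranspose_mul_self A), CFC.abs,
    star_eq_conjTranspose]

lemma traceNorm_nonneg (A : Matrix (Fin n) (Fin n) ℂ) : 0 ≤ traceNorm A := by
  rw [traceNorm_eq_re_trace_abs]
  exact (RCLike.nonneg_iff.mp (CFC.abs_nonneg A).posSemidef.trace_nonneg).1

lemma fidelity_eq_traceNorm_sq {ρ σ : Matrix (Fin n) (Fin n) ℂ} (hρ : ρ.PosSemidef)
    (hσ : σ.PosSemidef) : fidelity ρ σ = traceNorm (CFC.sqrt σ * CFC.sqrt ρ) ^ 2 := by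
  have hconj : CFC.sqrt ρ * σ * CFC.sqrt ρ =
      (CFC.sqrt σ * CFC.sqrt ρ)ᴴ * (CFC.sqrt σ * CFC.sqrt ρ) := by
    rw [conjTranspose_mul, ← star_eq_conjTranspose, ← star_eq_conjTranspose,
      (CFC.sqrt_nonneg ρ).isSelfAdjoint.star_eq, (CFC.sqrt_nonneg σ).isSelfAdjoint.star_eq]
    conv_lhs => rw [← CFC.sqrt_mul_sqrt_self σ hσ.nonneg]
    simp only [mul_assoc]
  rw [fidelity, traceNorm, matSqrt_eq_sqrt hρ, hconj]

end DensityMatrices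

theorem fuchs_van_de_graaf {n : ℕ} (σ₀ σ₁ : Matrix (Fin n) (Fin n) ℂ)
    (h₀ : IsDensityMatrix σ₀) (h₁ : IsDensityMatrix σ₁) :
    traceNorm (σ₀ - σ₁) ≥ 2 * (1 - Real.sqrt (fidelity σ₀ σ₁)) := by
  obtain ⟨hσ₀, htr₀⟩ := h₀
  obtain ⟨hσ₁, htr₁⟩ := h₁
  have ha : CFC.sqrt σ₀ ^ 2 = σ₀ := CFC.sq_sqrt σ₀ hσ₀.nonneg
  have hb : CFC.sqrt σ₁ ^ 2 = σ₁ := CFC.sq_sqrt σ₁ hσ₁.nonneg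
  have overlap : (CFC.sqrt σ₁ * CFC.sqrt σ₀).trace.re ≤ Real.sqrt (fidelity σ₀ σ₁) := by
    rw [fidelity_eq_traceNorm_sq hσ₀ hσ₁, Real.sqrt_sq (traceNorm_nonneg _),
      traceNorm_eq_re_trace_abs]
    exact re_trace_le_re_trace_abs (CFC.sqrt σ₁ * CFC.sqrt σ₀)
  have powers_stormer :
      ((CFC.sqrt σ₀ - CFC.sqrt σ₁) ^ 2).trace.re ≤ traceNorm (σ₀ - σ₁) := by
    rw [traceNorm_eq_re_trace_abs]
    conv_rhs => rw [← ha, ← hb]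
    exact re_trace_sub_sq_le_re_trace_abs_sq_sub (CFC.sqrt_nonneg σ₀) (CFC.sqrt_nonneg σ₁)
  have expand : ((CFC.sqrt σ₀ - CFC.sqrt σ₁) ^ 2).trace.re =
      2 - 2 * (CFC.sqrt σ₁ * CFC.sqrt σ₀).trace.re := by
    rw [trace_sub_sq, ha, hb, htr₀, htr₁]
    norm_num
  linarith
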